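/- Let m ∈ ℕ and α > 0. There exists a constant c > 0 such that for all n ∈ ℕ: I_{H(n)}(α,(0,1/n)^m) ≥ c · n^{2m(m−1)α² − m(1 − α² ± α)}, where H(n) ranges over {SO(2n), SO⁻(2n), SO(2n+1), SO⁻(2n+1), Sp(2n)}, with the sign − if H(n) = Sp(2n) and the sign + otherwise. In particular, I_{H(n)}(α,(0,π)^m) ≥ c · n^{2m(m−1)α² − m(1 − α² ± α)} for all n. -/

import Mathlib

set_option maxHeartbeats 1000000

/-!
The integrals `I_{H(n)}(α, R)` appearing in Claeys–Forkel–Keating,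
"Moments of moments of the characteristic polynomials of random orthogonal
and symplectic matrices".
-/

open MeasureTheory Real

noncomputable section

/-- The box `(a,b)^m`, as a subset of `Fin m → ℝ`. -/
def cube (m : ℕ) (a b : ℝ) : Set (Fin m → ℝ) := Set.univ.pi fun _ => Set.Ioo a b

/-- `F_n(θ₁,…,θ_m) = ∏_{1≤j<k≤m} (2 sin|(θ_j−θ_k)/2| + 1/n)^{−2α²} (2 sin|(θ_j+θ_k)/2| + 1/n)^{−2α²}`. -/
def Fn (m n : ℕ) (α : ℝ) (θ : Fin m → ℝ) : ℝ :=
  ∏ j : Fin m, ∏ k ∈ Finset.Ioi j,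
    ((2 * Real.sin (|θ j - θ k| / 2) + 1 / n) ^ (-(2 * α ^ 2)) *
      (2 * Real.sin (|θ j + θ k| / 2) + 1 / n) ^ (-(2 * α ^ 2)))

/-- `I_{SO(2n)}(α, R)`. -/
def ISOeven (m n : ℕ) (α : ℝ) (R : Set (Fin m → ℝ)) : ℝ :=
  (1 / π) ^ m * ∫ θ in R, Fn m n α θ *
    ∏ j : Fin m, (2 * Real.sin (θ j) + 1 / n) ^ (-α ^ 2 + α)

/-- `I_{SO⁻(2n)}(α, R)`. -/
def ISOminusEven (m n : ℕ) (α : ℝ) (R : Set (Fin m → ℝ)) : ℝ :=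
  (1 / π) ^ m * ∫ θ in R, Fn m n α θ *
    ∏ j : Fin m, ((2 * Real.sin (θ j) + 1 / n) ^ (-α ^ 2 - α) * (2 * Real.sin (θ j)) ^ (2 * α))

/-- `I_{SO(2n+1)}(α, R)`. -/
def ISOodd (m n : ℕ) (α : ℝ) (R : Set (Fin m → ℝ)) : ℝ :=
  (1 / π) ^ m * ∫ θ in R, Fn m n α θ *
    ∏ j : Fin m, ((2 * Real.sin (θ j / 2) + 1 / n) ^ (-α ^ 2 - α) *
      (2 * Real.cos (θ j / 2) + 1 / n) ^ (-α ^ 2 + α) * (2 * Real.sin (θ j / 2)) ^ (2 * α))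

/-- `I_{SO⁻(2n+1)}(α, R)`. -/
def ISOminusOdd (m n : ℕ) (α : ℝ) (R : Set (Fin m → ℝ)) : ℝ :=
  (1 / π) ^ m * ∫ θ in R, Fn m n α θ *
    ∏ j : Fin m, ((2 * Real.sin (θ j / 2) + 1 / n) ^ (-α ^ 2 + α) *
      (2 * Real.cos (θ j / 2) + 1 / n) ^ (-α ^ 2 - α) * (2 * Real.cos (θ j / 2)) ^ (2 * α))

/-- `I_{Sp(2n)}(α, R)`. -/
def ISp (m n : ℕ) (α : ℝ) (R : Set (Fin m → ℝ)) : ℝ :=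
  (1 / π) ^ m * ∫ θ in R, Fn m n α θ *
    ∏ j : Fin m, (2 * Real.sin (θ j) + 1 / n) ^ (-α ^ 2 - α)

end

/-!
On the box `(1/(2n), 1/n)^m` every base `2 sin(·) + 1/n` lies in `[1/n, 3/n]`, the bases
`2 sin θ_j` and `2 sin (θ_j/2)` are comparable to `1/n`, and the cosine bases are comparable
to `1`. Hence the integrand is at least a constant times `n^{2m(m-1)α² + m(α² ∓ α)}` on that
box, whose volume is `(2n)^{-m}`. The integrand is nonnegative and integrable on `(0,π)^m`,
and `(0,π)^m ⊇ (0,1/n)^m ⊇ (1/(2n), 1/n)^m`.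
-/

open Set Filter Topology

def PowLowerBound {X : Type*} (g : ℕ → X → ℝ) (S : ℕ → Set X) (e : ℝ) : Prop :=
  ∃ c > 0, ∀ n : ℕ, 1 ≤ n → ∀ x ∈ S n, c * (n : ℝ) ^ e ≤ g n x

namespace PowLowerBound

variable {X Y : Type*} {f g : ℕ → X → ℝ} {S : ℕ → Set X} {e e' : ℝ}

theorem mul (hf : PowLowerBound f S e) (hg : PowLowerBound g S e') :
    PowLowerBound (fun n x => f n x * g n x) S (e + e') := by
  obtain ⟨c, hc, hcf⟩ := hf
  obtain ⟨d, hd, hdg⟩ := hg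
  refine ⟨c * d, mul_pos hc hd, fun n hn x hx => ?_⟩
  have hn₀ : (0 : ℝ) < n := by exact_mod_cast hn
  calc c * d * (n : ℝ) ^ (e + e') = (c * (n : ℝ) ^ e) * (d * (n : ℝ) ^ e') := by
        rw [rpow_add hn₀]; ring
    _ ≤ f n x * g n x := mul_le_mul (hcf n hn x hx) (hdg n hn x hx) (by positivity)
        ((by positivity : (0 : ℝ) ≤ c * (n : ℝ) ^ e).trans (hcf n hn x hx))

theorem const_mul (hf : PowLowerBound f S e) {C : ℝ} (hC : 0 < C) :
    PowLowerBound (fun n x => C * f n x) S e := by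
  obtain ⟨c, hc, hcf⟩ := hf
  exact ⟨C * c, mul_pos hC hc, fun n hn x hx => by
    rw [mul_assoc]; exact mul_le_mul_of_nonneg_left (hcf n hn x hx) hC.le⟩

theorem prod {ι : Type*} (s : Finset ι) {f : ι → ℕ → X → ℝ} {e : ι → ℝ}
    (hf : ∀ i ∈ s, PowLowerBound (f i) S (e i)) :
    PowLowerBound (fun n x => ∏ i ∈ s, f i n x) S (∑ i ∈ s, e i) := by
  classical
  induction s using Finset.induction_on with
  | empty => exact ⟨1, one_pos, fun n _ x _ => by simp⟩
  | insert a s ha ih =>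
    simpa only [Finset.prod_insert ha, Finset.sum_insert ha] using
      (hf a (Finset.mem_insert_self a s)).mul
        (ih fun i hi => hf i (Finset.mem_insert_of_mem hi))

theorem comp (hf : PowLowerBound f S e) {T : ℕ → Set Y} (φ : Y → X)
    (hφ : ∀ n, MapsTo φ (T n) (S n)) : PowLowerBound (fun n y => f n (φ y)) T e := by
  obtain ⟨c, hc, hcf⟩ := hf
  exact ⟨c, hc, fun n hn y hy => hcf n hn (φ y) (hφ n hy)⟩

theorem eventually (hf : PowLowerBound f S e) :
    ∀ᶠ c in 𝓝[>] 0, ∀ n : ℕ, 1 ≤ n → ∀ x ∈ S n, c * (n : ℝ) ^ e ≤ f n x := by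
  obtain ⟨c₀, hc₀, hf⟩ := hf
  filter_upwards [Ioc_mem_nhdsGT hc₀] with c hc n hn x hx
  exact (mul_le_mul_of_nonneg_right hc.2 (by positivity)).trans (hf n hn x hx)

end PowLowerBound

theorem min_rpow_le_rpow {a b x : ℝ} (ha : 0 < a) (hx : x ∈ Icc a b) (p : ℝ) :
    min (a ^ p) (b ^ p) ≤ x ^ p := by
  rcases le_total 0 p with hp | hp
  · exact (min_le_left _ _).trans (rpow_le_rpow ha.le hx.1 hp)
  · exact (min_le_right _ _).trans (rpow_le_rpow_of_nonpos (ha.trans_le hx.1) hx.2 hp)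

section RpowBounds

variable {X : Type*} {g : ℕ → X → ℝ} {S : ℕ → Set X} {a b : ℝ}

theorem powLowerBound_rpow_of_mem_Icc (ha : 0 < a) (hab : a ≤ b)
    (hg : ∀ n : ℕ, 1 ≤ n → ∀ x ∈ S n, g n x ∈ Icc a b) (p : ℝ) :
    PowLowerBound (fun n x => g n x ^ p) S 0 :=
  ⟨min (a ^ p) (b ^ p), lt_min (rpow_pos_of_pos ha p) (rpow_pos_of_pos (ha.trans_le hab) p),
    fun n hn x hx => by simpa using min_rpow_le_rpow ha (hg n hn x hx) p⟩

theorem powLowerBound_rpow_of_mem_Icc_div (ha : 0 < a) (hab : a ≤ b)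
    (hg : ∀ n : ℕ, 1 ≤ n → ∀ x ∈ S n, g n x ∈ Icc (a / n) (b / n)) (p : ℝ) :
    PowLowerBound (fun n x => g n x ^ p) S (-p) := by
  refine ⟨min (a ^ p) (b ^ p), lt_min (rpow_pos_of_pos ha p)
    (rpow_pos_of_pos (ha.trans_le hab) p), fun n hn x hx => ?_⟩
  have hn₀ : (0 : ℝ) < n := by exact_mod_cast hn
  obtain ⟨hlo, hhi⟩ := hg n hn x hx
  have hnx : n * g n x ∈ Icc a b :=
    ⟨by rwa [div_le_iff₀' hn₀] at hlo, by rwa [le_div_iff₀' hn₀] at hhi⟩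
  have hg₀ : 0 ≤ g n x := (div_nonneg ha.le hn₀.le).trans hlo
  calc min (a ^ p) (b ^ p) * (n : ℝ) ^ (-p) ≤ (n * g n x) ^ p * (n : ℝ) ^ (-p) :=
        mul_le_mul_of_nonneg_right (min_rpow_le_rpow ha hnx p) (by positivity)
    _ = g n x ^ p := by
        rw [mul_rpow hn₀.le hg₀, rpow_neg hn₀.le]
        field_simp

end RpowBounds

theorem half_le_sin {x : ℝ} (hx₀ : 0 ≤ x) (hx : x ≤ π / 2) : x / 2 ≤ sin x := by
  have h : 1 / 2 ≤ 2 / π := by rw [le_div_iff₀ pi_pos]; linarith [pi_le_four]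
  nlinarith [mul_le_sin hx₀ hx]

theorem one_div_natCast_le_one {n : ℕ} (hn : 1 ≤ n) : 1 / (n : ℝ) ≤ 1 :=
  (div_le_one (by exact_mod_cast hn)).2 (by exact_mod_cast hn)

theorem two_mul_add_one_div_pos {n : ℕ} (hn : 1 ≤ n) {x : ℝ} (hx : 0 ≤ x) :
    0 < 2 * x + 1 / n := by
  have : (0 : ℝ) < n := by exact_mod_cast hn
  positivity

section ShortInterval

variable {n : ℕ} {t : ℝ}

theorem two_mul_sin_add_mem_Icc (hn : 1 ≤ n) {x : ℝ} (hx : x ∈ Icc 0 (1 / n : ℝ)) :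
    2 * sin x + 1 / n ∈ Icc (1 / n : ℝ) (3 / n) := by
  obtain ⟨hx₀, hx⟩ := hx
  have hxπ : x ≤ π := by linarith [one_div_natCast_le_one hn, pi_gt_three]
  have h3 : (3 : ℝ) / n = 2 * (1 / n) + 1 / n := by ring
  constructor <;> linarith [sin_nonneg_of_nonneg_of_le_pi hx₀ hxπ, sin_le hx₀]

theorem mem_Icc_of_mem_Ioo_one_div (ht : t ∈ Ioo (1 / (2 * (n : ℝ))) (1 / n)) :
    t ∈ Icc 0 (1 / n : ℝ) :=
  ⟨(by positivity : (0 : ℝ) ≤ 1 / (2 * n)).trans ht.1.le, ht.2.le⟩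

theorem half_mem_Icc_of_mem_Ioo_one_div (ht : t ∈ Ioo (1 / (2 * (n : ℝ))) (1 / n)) :
    t / 2 ∈ Icc 0 (1 / n : ℝ) := by
  obtain ⟨h₀, h₁⟩ := mem_Icc_of_mem_Ioo_one_div ht
  constructor <;> linarith

theorem two_mul_sin_mem_Icc (hn : 1 ≤ n) (ht : t ∈ Ioo (1 / (2 * (n : ℝ))) (1 / n)) :
    2 * sin t ∈ Icc (1 / 2 / n : ℝ) (2 / n) := by
  obtain ⟨ht₀, -⟩ := mem_Icc_of_mem_Ioo_one_div ht
  have htπ : t ≤ π / 2 := by linarith [ht.2, one_div_natCast_le_one hn, pi_gt_three]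
  have h₁ : (1 : ℝ) / (2 * n) = 1 / 2 / n := by ring
  have h₂ : (2 : ℝ) / n = 2 * (1 / n) := by ring
  constructor <;> linarith [half_le_sin ht₀ htπ, sin_le ht₀, ht.1, ht.2]

theorem two_mul_sin_half_mem_Icc (hn : 1 ≤ n) (ht : t ∈ Ioo (1 / (2 * (n : ℝ))) (1 / n)) :
    2 * sin (t / 2) ∈ Icc (1 / 4 / n : ℝ) (1 / n) := by
  obtain ⟨ht₀, -⟩ := half_mem_Icc_of_mem_Ioo_one_div ht
  have htπ : t / 2 ≤ π / 2 := by linarith [ht.2, one_div_natCast_le_one hn, pi_gt_three]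
  have h₁ : (1 : ℝ) / (2 * n) = 2 * (1 / 4 / n) := by ring
  constructor <;> linarith [half_le_sin ht₀ htπ, sin_le ht₀, ht.1, ht.2]

theorem two_mul_cos_half_mem_Icc (hn : 1 ≤ n) (ht : t ∈ Ioo (1 / (2 * (n : ℝ))) (1 / n)) :
    2 * cos (t / 2) ∈ Icc (1 : ℝ) 2 := by
  obtain ⟨ht₀, ht₁⟩ := mem_Icc_of_mem_Ioo_one_div ht
  have ht₁ : t ≤ 1 := ht₁.trans (one_div_natCast_le_one hn)
  constructor
  · nlinarith [one_sub_sq_div_two_le_cos (x := t / 2)]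
  · linarith [cos_le_one (t / 2)]

theorem two_mul_cos_half_add_mem_Icc (hn : 1 ≤ n) (ht : t ∈ Ioo (1 / (2 * (n : ℝ))) (1 / n)) :
    2 * cos (t / 2) + 1 / n ∈ Icc (1 : ℝ) 3 := by
  have h := two_mul_cos_half_mem_Icc hn ht
  constructor <;>
    linarith [h.1, h.2, one_div_natCast_le_one hn, (by positivity : (0 : ℝ) ≤ 1 / n)]

end ShortInterval

theorem sin_half_nonneg {t : ℝ} (ht : t ∈ Icc 0 π) : 0 ≤ sin (t / 2) :=
  sin_nonneg_of_mem_Icc ⟨by linarith [ht.1], by linarith [ht.2, pi_pos]⟩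

theorem cos_half_nonneg {t : ℝ} (ht : t ∈ Icc 0 π) : 0 ≤ cos (t / 2) :=
  cos_nonneg_of_mem_Icc ⟨by linarith [ht.1, pi_pos], by linarith [ht.2]⟩

theorem sin_abs_div_two_nonneg {z : ℝ} (hz : |z| ≤ 2 * π) : 0 ≤ sin (|z| / 2) :=
  sin_nonneg_of_nonneg_of_le_pi (by positivity) (by linarith)

theorem Fin.sum_card_Ioi (m : ℕ) :
    ∑ j : Fin m, ((Finset.Ioi j).card : ℝ) = m * (m - 1) / 2 := by
  have h : (∑ j : Fin m, (Finset.Ioi j).card) * 2 = m * (m - 1) := by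
    simp only [Fin.card_Ioi]
    rw [Fin.sum_univ_eq_sum_range (fun j => m - 1 - j) m, Finset.sum_range_reflect (fun i => i) m]
    exact Finset.sum_range_id_mul_two m
  rcases m with _ | m
  · simp
  · have h' := congrArg (fun k : ℕ => (k : ℝ)) h
    push_cast at h' ⊢
    rw [eq_div_iff two_ne_zero]
    linarith

section Fn

variable {m n : ℕ} {α : ℝ}

theorem sin_abs_sub_add_nonneg {θ : Fin m → ℝ} (hθ : θ ∈ univ.pi fun _ => Icc 0 π)
    (j k : Fin m) :
    0 ≤ sin (|θ j - θ k| / 2) ∧ 0 ≤ sin (|θ j + θ k| / 2) := by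
  obtain ⟨hj₀, hjπ⟩ := hθ j (mem_univ j)
  obtain ⟨hk₀, hkπ⟩ := hθ k (mem_univ k)
  exact ⟨sin_abs_div_two_nonneg (abs_le.2 ⟨by linarith, by linarith⟩),
    sin_abs_div_two_nonneg (abs_le.2 ⟨by linarith, by linarith⟩)⟩

theorem Fn_nonneg {θ : Fin m → ℝ} (hθ : θ ∈ univ.pi fun _ => Icc 0 π) :
    0 ≤ Fn m n α θ := by
  refine Finset.prod_nonneg fun j _ => Finset.prod_nonneg fun k _ => ?_
  obtain ⟨hsub, hadd⟩ := sin_abs_sub_add_nonneg hθ j k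
  exact mul_nonneg (rpow_nonneg (by positivity) _) (rpow_nonneg (by positivity) _)

theorem continuousOn_Fn (hn : 1 ≤ n) : ContinuousOn (Fn m n α) (univ.pi fun _ => Icc 0 π) := by
  refine continuousOn_finsetProd _ fun j _ => continuousOn_finsetProd _ fun k _ => ?_
  refine ContinuousOn.mul ?_ ?_ <;>
    refine ContinuousOn.rpow_const (by fun_prop) fun θ hθ =>
      Or.inl (two_mul_add_one_div_pos hn ?_).ne'
  · exact (sin_abs_sub_add_nonneg hθ j k).1
  · exact (sin_abs_sub_add_nonneg hθ j k).2

theorem powLowerBound_Fn (m : ℕ) (α : ℝ) :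
    PowLowerBound (fun n θ => Fn m n α θ) (fun n => cube m (1 / (2 * n)) (1 / n))
      (2 * m * (m - 1) * α ^ 2) := by
  have hbase : ∀ z : (Fin m → ℝ) → ℝ,
      (∀ n : ℕ, 1 ≤ n → ∀ θ ∈ cube m (1 / (2 * n)) (1 / n),
        z θ ∈ Icc 0 (1 / n : ℝ)) →
      PowLowerBound (fun n θ => (2 * sin (z θ) + 1 / n) ^ (-(2 * α ^ 2)))
        (fun n => cube m (1 / (2 * n)) (1 / n)) (2 * α ^ 2) := fun z hz => by
    simpa only [neg_neg] using powLowerBound_rpow_of_mem_Icc_div one_pos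
      (by norm_num : (1 : ℝ) ≤ 3)
      (fun n hn θ hθ => two_mul_sin_add_mem_Icc hn (hz n hn θ hθ)) (-(2 * α ^ 2))
  have hpair : ∀ j k : Fin m, PowLowerBound
      (fun n θ => (2 * sin (|θ j - θ k| / 2) + 1 / n) ^ (-(2 * α ^ 2)) *
        (2 * sin (|θ j + θ k| / 2) + 1 / n) ^ (-(2 * α ^ 2)))
      (fun n => cube m (1 / (2 * n)) (1 / n)) (2 * α ^ 2 + 2 * α ^ 2) := fun j k => by
    refine (hbase _ fun n hn θ hθ => ?_).mul (hbase _ fun n hn θ hθ => ?_) <;>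
    · obtain ⟨hj₁, hj₂⟩ := hθ j (mem_univ j)
      obtain ⟨hk₁, hk₂⟩ := hθ k (mem_univ k)
      have h₀ : (0 : ℝ) ≤ 1 / (2 * n) := by positivity
      have h₁ : (1 : ℝ) / (2 * n) = 1 / n / 2 := by ring
      refine ⟨by positivity, ?_⟩
      rw [div_le_iff₀ two_pos, abs_le]
      constructor <;> linarith
  have h := PowLowerBound.prod Finset.univ fun j _ =>
    PowLowerBound.prod (Finset.Ioi j) fun k _ => hpair j k
  simp only [Finset.sum_const, nsmul_eq_mul, ← Finset.sum_mul, Fin.sum_card_Ioi] at h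
  rwa [show (2 * m * (m - 1) * α ^ 2 : ℝ) = m * (m - 1) / 2 * (2 * α ^ 2 + 2 * α ^ 2) by ring]

end Fn

theorem measurableSet_cube (m : ℕ) (a b : ℝ) : MeasurableSet (cube m a b) :=
  MeasurableSet.univ_pi fun _ => measurableSet_Ioo

theorem cube_subset_cube {m : ℕ} {a b a' b' : ℝ} (ha : a' ≤ a) (hb : b ≤ b') :
    cube m a b ⊆ cube m a' b' :=
  pi_mono fun _ _ => Ioo_subset_Ioo ha hb

theorem volume_cube_ne_top (m : ℕ) (a b : ℝ) : volume (cube m a b) ≠ ⊤ := by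
  simp [cube, Real.volume_pi_Ioo]

theorem volume_real_cube (m : ℕ) {a b : ℝ} (hab : a ≤ b) :
    volume.real (cube m a b) = (b - a) ^ m := by
  simp [cube, measureReal_def, Real.volume_pi_Ioo, hab]

theorem PowLowerBound.setIntegral {m : ℕ} {f : ℕ → (Fin m → ℝ) → ℝ} {e : ℝ}
    (hf : PowLowerBound f (fun n => cube m (1 / (2 * n)) (1 / n)) e)
    (hcont : ∀ n : ℕ, 1 ≤ n → ContinuousOn (f n) (univ.pi fun _ => Icc 0 π))
    (hnonneg : ∀ n : ℕ, 1 ≤ n → ∀ θ ∈ cube m 0 π, 0 ≤ f n θ) :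
    PowLowerBound (fun n R => ∫ θ in R, f n θ) (fun n => {cube m 0 (1 / n), cube m 0 π})
      (e - m) := by
  obtain ⟨c, hc, hcf⟩ := hf
  refine ⟨c * (1 / 2) ^ m, by positivity, fun n hn R hR => ?_⟩
  have hn₀ : (0 : ℝ) < n := by exact_mod_cast hn
  have hnπ : 1 / (n : ℝ) ≤ π := by linarith [one_div_natCast_le_one hn, pi_gt_three]
  have hR : cube m (1 / (2 * n)) (1 / n) ⊆ R ∧ R ⊆ cube m 0 π ∧ MeasurableSet R := by
    rcases hR with rfl | rfl
    · exact ⟨cube_subset_cube (by positivity) le_rfl, cube_subset_cube le_rfl hnπ,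
        measurableSet_cube _ _ _⟩
    · exact ⟨cube_subset_cube (by positivity) hnπ, subset_rfl, measurableSet_cube _ _ _⟩
  have hint : IntegrableOn (f n) (cube m 0 π) :=
    ((hcont n hn).integrableOn_compact (isCompact_univ_pi fun _ => isCompact_Icc)).mono_set
      (pi_mono fun _ _ => Ioo_subset_Icc_self)
  calc c * (1 / 2) ^ m * (n : ℝ) ^ (e - m)
        = volume.real (cube m (1 / (2 * n)) (1 / n)) • (c * (n : ℝ) ^ e) := by
        rw [volume_real_cube m (by gcongr; linarith), smul_eq_mul, rpow_sub hn₀, rpow_natCast,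
          show 1 / (n : ℝ) - 1 / (2 * n) = 1 / 2 * (n : ℝ)⁻¹ by ring, mul_pow, inv_pow]
        field_simp
    _ ≤ ∫ θ in cube m (1 / (2 * n)) (1 / n), f n θ :=
        setIntegral_ge_of_const_le (measurableSet_cube _ _ _) (volume_cube_ne_top _ _ _)
          (hcf n hn) (hint.mono_set (hR.1.trans hR.2.1))
    _ ≤ ∫ θ in R, f n θ :=
        setIntegral_mono_set (hint.mono_set hR.2.1)
          (ae_restrict_of_forall_mem hR.2.2 fun θ hθ => hnonneg n hn θ (hR.2.1 hθ))
          hR.1.eventuallyLE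

theorem powLowerBound_integral_Fn_mul_prod {m : ℕ} {α e E : ℝ} {w : ℕ → ℝ → ℝ}
    (hcont : ∀ n : ℕ, 1 ≤ n → ContinuousOn (w n) (Icc 0 π))
    (hnonneg : ∀ n : ℕ, 1 ≤ n → ∀ t ∈ Icc 0 π, 0 ≤ w n t)
    (hw : PowLowerBound w (fun n => Ioo (1 / (2 * (n : ℝ))) (1 / n)) e)
    (hE : E = 2 * m * (m - 1) * α ^ 2 + m * e - m) :
    PowLowerBound (fun n R => (1 / π) ^ m * ∫ θ in R, Fn m n α θ * ∏ j, w n (θ j))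
      (fun n => {cube m 0 (1 / n), cube m 0 π}) E := by
  have hW : PowLowerBound (fun n θ => ∏ j, w n (θ j)) (fun n => cube m (1 / (2 * n)) (1 / n))
      (m * e) := by
    simpa using PowLowerBound.prod Finset.univ fun j _ =>
      hw.comp (T := fun n : ℕ => cube m (1 / (2 * n)) (1 / n)) (fun θ => θ j)
        fun n θ hθ => hθ j (mem_univ j)
  subst hE
  refine (((powLowerBound_Fn m α).mul hW).setIntegral (fun n hn => ?_)
    (fun n hn θ hθ => ?_)).const_mul (by positivity)
  · exact (continuousOn_Fn hn).mul (continuousOn_finsetProd _ fun j _ =>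
      (hcont n hn).comp (continuousOn_apply j _) fun θ hθ => hθ j (mem_univ j))
  · have hθ' : θ ∈ univ.pi fun _ => Icc 0 π := pi_mono (fun _ _ => Ioo_subset_Icc_self) hθ
    exact mul_nonneg (Fn_nonneg hθ')
      (Finset.prod_nonneg fun j _ => hnonneg n hn _ (hθ' j (mem_univ j)))

section Families

variable (m : ℕ)

theorem powLowerBound_ISOeven (α : ℝ) :
    PowLowerBound (fun n R => ISOeven m n α R) (fun n => {cube m 0 (1 / n), cube m 0 π})
      (2 * m * ((m : ℝ) - 1) * α ^ 2 - m * (1 - α ^ 2 + α)) :=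
  powLowerBound_integral_Fn_mul_prod (w := fun n t => (2 * sin t + 1 / n) ^ (-α ^ 2 + α))
    (fun n hn => ContinuousOn.rpow_const (by fun_prop) fun t ht =>
      Or.inl (two_mul_add_one_div_pos hn (sin_nonneg_of_mem_Icc ht)).ne')
    (fun n hn t ht => rpow_nonneg (two_mul_add_one_div_pos hn (sin_nonneg_of_mem_Icc ht)).le _)
    (powLowerBound_rpow_of_mem_Icc_div one_pos (by norm_num)
      (fun n hn t ht => two_mul_sin_add_mem_Icc hn (mem_Icc_of_mem_Ioo_one_div ht)) _)
    (by ring)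

theorem powLowerBound_ISOminusEven {α : ℝ} (hα : 0 ≤ α) :
    PowLowerBound (fun n R => ISOminusEven m n α R) (fun n => {cube m 0 (1 / n), cube m 0 π})
      (2 * m * ((m : ℝ) - 1) * α ^ 2 - m * (1 - α ^ 2 + α)) :=
  powLowerBound_integral_Fn_mul_prod
    (w := fun n t => (2 * sin t + 1 / n) ^ (-α ^ 2 - α) * (2 * sin t) ^ (2 * α))
    (fun n hn => (ContinuousOn.rpow_const (by fun_prop) fun t ht =>
      Or.inl (two_mul_add_one_div_pos hn (sin_nonneg_of_mem_Icc ht)).ne').mul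
      (ContinuousOn.rpow_const (by fun_prop) fun _ _ => Or.inr (by positivity)))
    (fun n hn t ht => mul_nonneg
      (rpow_nonneg (two_mul_add_one_div_pos hn (sin_nonneg_of_mem_Icc ht)).le _)
      (rpow_nonneg (mul_nonneg two_pos.le (sin_nonneg_of_mem_Icc ht)) _))
    ((powLowerBound_rpow_of_mem_Icc_div one_pos (by norm_num)
      (fun n hn t ht => two_mul_sin_add_mem_Icc hn (mem_Icc_of_mem_Ioo_one_div ht)) _).mul
      (powLowerBound_rpow_of_mem_Icc_div (by norm_num) (by norm_num)
        (fun n hn t ht => two_mul_sin_mem_Icc hn ht) _))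
    (by ring)

theorem powLowerBound_ISOodd {α : ℝ} (hα : 0 ≤ α) :
    PowLowerBound (fun n R => ISOodd m n α R) (fun n => {cube m 0 (1 / n), cube m 0 π})
      (2 * m * ((m : ℝ) - 1) * α ^ 2 - m * (1 - α ^ 2 + α)) :=
  powLowerBound_integral_Fn_mul_prod
    (w := fun n t => (2 * sin (t / 2) + 1 / n) ^ (-α ^ 2 - α) *
      (2 * cos (t / 2) + 1 / n) ^ (-α ^ 2 + α) * (2 * sin (t / 2)) ^ (2 * α))
    (fun n hn => ((ContinuousOn.rpow_const (by fun_prop) fun t ht =>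
      Or.inl (two_mul_add_one_div_pos hn (sin_half_nonneg ht)).ne').mul
      (ContinuousOn.rpow_const (by fun_prop) fun t ht =>
        Or.inl (two_mul_add_one_div_pos hn (cos_half_nonneg ht)).ne')).mul
      (ContinuousOn.rpow_const (by fun_prop) fun _ _ => Or.inr (by positivity)))
    (fun n hn t ht => mul_nonneg (mul_nonneg
      (rpow_nonneg (two_mul_add_one_div_pos hn (sin_half_nonneg ht)).le _)
      (rpow_nonneg (two_mul_add_one_div_pos hn (cos_half_nonneg ht)).le _))
      (rpow_nonneg (mul_nonneg two_pos.le (sin_half_nonneg ht)) _))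
    (((powLowerBound_rpow_of_mem_Icc_div one_pos (by norm_num)
      (fun n hn t ht => two_mul_sin_add_mem_Icc hn (half_mem_Icc_of_mem_Ioo_one_div ht)) _).mul
      (powLowerBound_rpow_of_mem_Icc one_pos (by norm_num)
        (fun n hn t ht => two_mul_cos_half_add_mem_Icc hn ht) _)).mul
      (powLowerBound_rpow_of_mem_Icc_div (by norm_num) (by norm_num)
        (fun n hn t ht => two_mul_sin_half_mem_Icc hn ht) _))
    (by ring)

theorem powLowerBound_ISOminusOdd {α : ℝ} (hα : 0 ≤ α) :
    PowLowerBound (fun n R => ISOminusOdd m n α R) (fun n => {cube m 0 (1 / n), cube m 0 π})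
      (2 * m * ((m : ℝ) - 1) * α ^ 2 - m * (1 - α ^ 2 + α)) :=
  powLowerBound_integral_Fn_mul_prod
    (w := fun n t => (2 * sin (t / 2) + 1 / n) ^ (-α ^ 2 + α) *
      (2 * cos (t / 2) + 1 / n) ^ (-α ^ 2 - α) * (2 * cos (t / 2)) ^ (2 * α))
    (fun n hn => ((ContinuousOn.rpow_const (by fun_prop) fun t ht =>
      Or.inl (two_mul_add_one_div_pos hn (sin_half_nonneg ht)).ne').mul
      (ContinuousOn.rpow_const (by fun_prop) fun t ht =>
        Or.inl (two_mul_add_one_div_pos hn (cos_half_nonneg ht)).ne')).mul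
      (ContinuousOn.rpow_const (by fun_prop) fun _ _ => Or.inr (by positivity)))
    (fun n hn t ht => mul_nonneg (mul_nonneg
      (rpow_nonneg (two_mul_add_one_div_pos hn (sin_half_nonneg ht)).le _)
      (rpow_nonneg (two_mul_add_one_div_pos hn (cos_half_nonneg ht)).le _))
      (rpow_nonneg (mul_nonneg two_pos.le (cos_half_nonneg ht)) _))
    (((powLowerBound_rpow_of_mem_Icc_div one_pos (by norm_num)
      (fun n hn t ht => two_mul_sin_add_mem_Icc hn (half_mem_Icc_of_mem_Ioo_one_div ht)) _).mul
      (powLowerBound_rpow_of_mem_Icc one_pos (by norm_num)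
        (fun n hn t ht => two_mul_cos_half_add_mem_Icc hn ht) _)).mul
      (powLowerBound_rpow_of_mem_Icc one_pos (by norm_num)
        (fun n hn t ht => two_mul_cos_half_mem_Icc hn ht) _))
    (by ring)

theorem powLowerBound_ISp (α : ℝ) :
    PowLowerBound (fun n R => ISp m n α R) (fun n => {cube m 0 (1 / n), cube m 0 π})
      (2 * m * ((m : ℝ) - 1) * α ^ 2 - m * (1 - α ^ 2 - α)) :=
  powLowerBound_integral_Fn_mul_prod (w := fun n t => (2 * sin t + 1 / n) ^ (-α ^ 2 - α))
    (fun n hn => ContinuousOn.rpow_const (by fun_prop) fun t ht =>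
      Or.inl (two_mul_add_one_div_pos hn (sin_nonneg_of_mem_Icc ht)).ne')
    (fun n hn t ht => rpow_nonneg (two_mul_add_one_div_pos hn (sin_nonneg_of_mem_Icc ht)).le _)
    (powLowerBound_rpow_of_mem_Icc_div one_pos (by norm_num)
      (fun n hn t ht => two_mul_sin_add_mem_Icc hn (mem_Icc_of_mem_Ioo_one_div ht)) _)
    (by ring)

end Families

theorem I_lower_bound_general (m : ℕ) (α : ℝ) (hα0 : 0 < α) :
    ∃ c : ℝ, 0 < c ∧ ∀ n : ℕ, 1 ≤ n →
      (c * (n : ℝ) ^ (2 * m * ((m : ℝ) - 1) * α ^ 2 - m * (1 - α ^ 2 + α)) ≤ ISOeven m n α (cube m 0 (1 / n)) ∧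
        c * (n : ℝ) ^ (2 * m * ((m : ℝ) - 1) * α ^ 2 - m * (1 - α ^ 2 + α)) ≤ ISOeven m n α (cube m 0 π)) ∧
      (c * (n : ℝ) ^ (2 * m * ((m : ℝ) - 1) * α ^ 2 - m * (1 - α ^ 2 + α)) ≤ ISOminusEven m n α (cube m 0 (1 / n)) ∧
        c * (n : ℝ) ^ (2 * m * ((m : ℝ) - 1) * α ^ 2 - m * (1 - α ^ 2 + α)) ≤ ISOminusEven m n α (cube m 0 π)) ∧
      (c * (n : ℝ) ^ (2 * m * ((m : ℝ) - 1) * α ^ 2 - m * (1 - α ^ 2 + α)) ≤ ISOodd m n α (cube m 0 (1 / n)) ∧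
        c * (n : ℝ) ^ (2 * m * ((m : ℝ) - 1) * α ^ 2 - m * (1 - α ^ 2 + α)) ≤ ISOodd m n α (cube m 0 π)) ∧
      (c * (n : ℝ) ^ (2 * m * ((m : ℝ) - 1) * α ^ 2 - m * (1 - α ^ 2 + α)) ≤ ISOminusOdd m n α (cube m 0 (1 / n)) ∧
        c * (n : ℝ) ^ (2 * m * ((m : ℝ) - 1) * α ^ 2 - m * (1 - α ^ 2 + α)) ≤ ISOminusOdd m n α (cube m 0 π)) ∧
      (c * (n : ℝ) ^ (2 * m * ((m : ℝ) - 1) * α ^ 2 - m * (1 - α ^ 2 - α)) ≤ ISp m n α (cube m 0 (1 / n)) ∧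
        c * (n : ℝ) ^ (2 * m * ((m : ℝ) - 1) * α ^ 2 - m * (1 - α ^ 2 - α)) ≤ ISp m n α (cube m 0 π)) := by
  obtain ⟨c, ⟨⟨⟨⟨hSO, hSOm⟩, hSOodd⟩, hSOmodd⟩, hSp⟩, hc⟩ :=
    (((((powLowerBound_ISOeven m α).eventually.and
      (powLowerBound_ISOminusEven m hα0.le).eventually).and
      (powLowerBound_ISOodd m hα0.le).eventually).and
      (powLowerBound_ISOminusOdd m hα0.le).eventually).and
      (powLowerBound_ISp m α).eventually).and self_mem_nhdsWithin |>.exists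
  refine ⟨c, hc, fun n hn => ?_⟩
  exact ⟨⟨hSO n hn _ (Or.inl rfl), hSO n hn _ (Or.inr rfl)⟩,
    ⟨hSOm n hn _ (Or.inl rfl), hSOm n hn _ (Or.inr rfl)⟩,
    ⟨hSOodd n hn _ (Or.inl rfl), hSOodd n hn _ (Or.inr rfl)⟩,
    ⟨hSOmodd n hn _ (Or.inl rfl), hSOmodd n hn _ (Or.inr rfl)⟩,
    ⟨hSp n hn _ (Or.inl rfl), hSp n hn _ (Or.inr rfl)⟩⟩

/-- **Lower bound (equation (1.12)).** `I_{H(n)}(α,(0,1/n)^m) ≥ c n^{2m(m−1)α² − m(1−α²±α)}`,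
and in particular the same lower bound holds for `I_{H(n)}(α,(0,π)^m)`. -/
theorem I_lower_bound (m : ℕ) (hm : 1 ≤ m) (α : ℝ) (hα0 : 0 < α) :
    ∃ c : ℝ, 0 < c ∧ ∀ n : ℕ, 1 ≤ n →
      (c * (n : ℝ) ^ (2 * m * ((m : ℝ) - 1) * α ^ 2 - m * (1 - α ^ 2 + α)) ≤ ISOeven m n α (cube m 0 (1 / n)) ∧
        c * (n : ℝ) ^ (2 * m * ((m : ℝ) - 1) * α ^ 2 - m * (1 - α ^ 2 + α)) ≤ ISOeven m n α (cube m 0 π)) ∧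
      (c * (n : ℝ) ^ (2 * m * ((m : ℝ) - 1) * α ^ 2 - m * (1 - α ^ 2 + α)) ≤ ISOminusEven m n α (cube m 0 (1 / n)) ∧
        c * (n : ℝ) ^ (2 * m * ((m : ℝ) - 1) * α ^ 2 - m * (1 - α ^ 2 + α)) ≤ ISOminusEven m n α (cube m 0 π)) ∧
      (c * (n : ℝ) ^ (2 * m * ((m : ℝ) - 1) * α ^ 2 - m * (1 - α ^ 2 + α)) ≤ ISOodd m n α (cube m 0 (1 / n)) ∧
        c * (n : ℝ) ^ (2 * m * ((m : ℝ) - 1) * α ^ 2 - m * (1 - α ^ 2 + α)) ≤ ISOodd m n α (cube m 0 π)) ∧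
      (c * (n : ℝ) ^ (2 * m * ((m : ℝ) - 1) * α ^ 2 - m * (1 - α ^ 2 + α)) ≤ ISOminusOdd m n α (cube m 0 (1 / n)) ∧
        c * (n : ℝ) ^ (2 * m * ((m : ℝ) - 1) * α ^ 2 - m * (1 - α ^ 2 + α)) ≤ ISOminusOdd m n α (cube m 0 π)) ∧
      (c * (n : ℝ) ^ (2 * m * ((m : ℝ) - 1) * α ^ 2 - m * (1 - α ^ 2 - α)) ≤ ISp m n α (cube m 0 (1 / n)) ∧
        c * (n : ℝ) ^ (2 * m * ((m : ℝ) - 1) * α ^ 2 - m * (1 - α ^ 2 - α)) ≤ ISp m n α (cube m 0 π)) :=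
  I_lower_bound_general m α hα0
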